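/- arXiv:1007.4920 — 2 statements merged into one kernel-verified Lean document; each statement's English description precedes it below -/
import Mathlib

section
/- Let F, G : ℝ^d → ℝ^d be twice continuously differentiable vector fields, and define their Lie bracket by [F, G](x) = DG(x)·F(x) − DF(x)·G(x), where DF(x) denotes the derivative (Jacobian) of F at x. Fix X₀ ∈ ℝ^d and suppose there exist ε > 0 and maps φ^F, φ^G : (−ε, ε) × U → ℝ^d, defined on a neighborhood U of X₀, such that φ^F(0, x) = x, ∂φ^F/∂t (t, x) = F(φ^F(t, x)) for all t and x (and similarly for φ^G), and such that the composition Θ(t) = φ^G(−t, φ^F(−t, φ^G(t, φ^F(t, X₀)))) is defined for all t in a neighborhood of 0. Then there exist constants C > 0 and ε' > 0 such that ‖Θ(t) − X₀ − t² [F, G](X₀)‖ ≤ C |t|³ for all t ∈ (−ε', ε'). -/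
/-!
Integrating the flow equation three times gives, uniformly in the base point near `X₀`,
`φ t x = x + t • V x + (t² / 2) • DV(x) (V x) + O(t³)`; uniformity comes from an a priori
bound keeping trajectories that start near `X₀` close to it for short times. Substituting
this expansion into itself four times, the backward flows being flows of `-F` and `-G`, the
first-order terms cancel and the second-order terms leave `DG(X₀) F(X₀) - DF(X₀) G(X₀)`.
-/

open Asymptotics Filter Topology Set Metric

section Integration

variable {α F : Type*} [NormedAddCommGroup F] [NormedSpace ℝ F] {l : Filter α}

theorem eventually_forall_uIcc_zero {P : α × ℝ → Prop} (h : ∀ᶠ p in l ×ˢ 𝓝 0, P p) :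
    ∀ᶠ p in l ×ˢ 𝓝 0, ∀ s ∈ uIcc 0 p.2, P (p.1, s) := by
  obtain ⟨pa, hpa, pb, hpb, hP⟩ := eventually_prod_iff.1 h
  obtain ⟨η, hη, hball⟩ := Metric.mem_nhds_iff.1 hpb
  refine eventually_prod_iff.2 ⟨pa, hpa, (· ∈ ball 0 η), ball_mem_nhds 0 hη,
    fun ha t ht s hs => hP ha (hball ?_)⟩
  exact (convex_ball (0 : ℝ) η).segment_subset (mem_ball_self hη) ht
    (by rwa [segment_eq_uIcc])

theorem isBigO_pow_succ_of_hasDerivAt {g g' : α × ℝ → F} {n : ℕ}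
    (h0 : ∀ᶠ a in l, g (a, 0) = 0)
    (hg : ∀ᶠ p in l ×ˢ 𝓝 0, HasDerivAt (fun s => g (p.1, s)) (g' p) p.2)
    (hg' : g' =O[l ×ˢ 𝓝 0] fun p => p.2 ^ n) :
    g =O[l ×ˢ 𝓝 0] fun p => p.2 ^ (n + 1) := by
  obtain ⟨C, hC, hCg'⟩ := hg'.exists_nonneg
  refine IsBigO.of_bound C ?_
  filter_upwards [eventually_forall_uIcc_zero (hg.and hCg'.bound), h0.prod_inl _]
    with ⟨a, t⟩ h ha0
  have hbound : ∀ s ∈ uIcc 0 t, ‖g' (a, s)‖ ≤ C * |t| ^ n := fun s hs => by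
    have hst : |s| ≤ |t| := by simpa using abs_sub_left_of_mem_uIcc hs
    calc ‖g' (a, s)‖ ≤ C * |s| ^ n := by simpa using (h s hs).2
      _ ≤ C * |t| ^ n := by gcongr
  have := (convex_uIcc 0 t).norm_image_sub_le_of_norm_hasDerivWithin_le
    (fun s hs => (h s hs).1.hasDerivWithinAt) hbound left_mem_uIcc right_mem_uIcc
  simpa [ha0, pow_succ, mul_assoc] using this

end Integration

theorem LipschitzOnWith.isBigO_comp_sub {α E F : Type*} [SeminormedAddCommGroup E]
    [SeminormedAddCommGroup F] {f : E → F} {K : NNReal} {s : Set E}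
    (hf : LipschitzOnWith K f s) {l : Filter α} {u v : α → E} (hu : ∀ᶠ a in l, u a ∈ s)
    (hv : ∀ᶠ a in l, v a ∈ s) :
    (fun a => f (u a) - f (v a)) =O[l] fun a => u a - v a :=
  IsBigO.of_bound K (by filter_upwards [hu, hv] with a hua hva using hf.norm_sub_le hua hva)

section Taylor

variable {E F : Type*} [NormedAddCommGroup E] [NormedSpace ℝ E]
  [NormedAddCommGroup F] [NormedSpace ℝ F]

theorem ContDiffAt.isBigO_sub_sub_fderiv {f : E → F} {x₀ : E} (hf : ContDiffAt ℝ 2 f x₀) :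
    (fun y => f y - f x₀ - fderiv ℝ f x₀ (y - x₀)) =O[𝓝 x₀] fun y => ‖y - x₀‖ ^ 2 := by
  obtain ⟨K, s, hs, hK⟩ :=
    (hf.fderiv_right (m := 1) (by norm_num)).exists_lipschitzOnWith
  have hdiff : ∀ᶠ y in 𝓝 x₀, DifferentiableAt ℝ f y :=
    (hf.eventually (by simp)).mono fun y hy => hy.differentiableAt (by norm_num)
  obtain ⟨r, hr, hball⟩ := Metric.mem_nhds_iff.1 (inter_mem hs hdiff)
  refine IsBigO.of_bound K ?_
  filter_upwards [ball_mem_nhds x₀ hr] with y hy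
  have hx₀r : x₀ ∈ ball x₀ r := mem_ball_self hr
  have hconvex := (convex_closedBall x₀ ‖y - x₀‖).inter (convex_ball x₀ r)
  have := hconvex.norm_image_sub_le_of_norm_fderiv_le' (𝕜 := ℝ) (φ := fderiv ℝ f x₀)
    (C := K * ‖y - x₀‖) (fun z hz => (hball hz.2).2) (fun z hz => ?_)
    ⟨mem_closedBall_self (norm_nonneg _), hx₀r⟩ ⟨by simp [dist_eq_norm], hy⟩
  · simpa [sq, mul_assoc] using this
  · refine (hK.norm_sub_le (hball hz.2).1 (hball hx₀r).1).trans ?_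
    gcongr
    simpa [dist_eq_norm] using hz.1

theorem ContDiffAt.contDiffAt_fderiv_apply_self {V : E → E} {x₀ : E}
    (hV : ContDiffAt ℝ 2 V x₀) : ContDiffAt ℝ 1 (fun y => fderiv ℝ V y (V y)) x₀ :=
  (hV.fderiv_right (by norm_num)).clm_apply (hV.of_le (by norm_num))

end Taylor

section Powers

variable {E : Type*} [NormedAddCommGroup E] [NormedSpace ℝ E] {l : Filter ℝ}

theorem isBigO_pow_smul_const (k : ℕ) (v : E) :
    (fun t : ℝ => t ^ k • v) =O[l] fun t => t ^ k :=
  IsBigO.of_bound ‖v‖ (Eventually.of_forall fun t => by rw [norm_smul, mul_comm])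

theorem Asymptotics.IsBigO.smul_pow {k : ℝ → ℝ} {f : ℝ → E} {m n : ℕ}
    (hk : k =O[l] fun t => t ^ m) (hf : f =O[l] fun t => t ^ n) :
    (fun t => k t • f t) =O[l] fun t => t ^ (m + n) := by
  simpa [pow_add] using hk.smul hf

end Powers

theorem exists_pos_bound_of_isBigO_pow {E : Type*} [NormedAddCommGroup E] {f : ℝ → E} {n : ℕ}
    (h : f =O[𝓝 0] fun t => t ^ n) :
    ∃ C > 0, ∃ ε > 0, ∀ t : ℝ, |t| < ε → ‖f t‖ ≤ C * |t| ^ n := by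
  obtain ⟨C, hC, hCf⟩ := h.exists_pos
  obtain ⟨ε, hε, hball⟩ := Metric.eventually_nhds_iff.1 hCf.bound
  exact ⟨C, hC, ε, hε, fun t ht => by simpa using hball (by simpa using ht)⟩

section Confinement

variable {E : Type*} [NormedAddCommGroup E] [NormedSpace ℝ E] {V : E → E} {ψ : ℝ → E}
  {r M t : ℝ}

theorem norm_sub_le_mul_of_hasDerivAt (hM : 0 ≤ M)
    (hV : ∀ y ∈ closedBall (ψ 0) r, ‖V y‖ < M)
    (hψ : ∀ s ∈ Icc 0 t, HasDerivAt ψ (V (ψ s)) s) (htr : M * t ≤ r) :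
    ∀ s ∈ Icc 0 t, ‖ψ s - ψ 0‖ ≤ M * s := by
  refine image_norm_le_of_norm_deriv_right_lt_deriv_boundary (f := fun s => ψ s - ψ 0)
    (f' := fun s => V (ψ s))
    (fun s hs => (hψ s hs).continuousAt.continuousWithinAt.sub continuousWithinAt_const)
    (fun s hs => ((hψ s (Ico_subset_Icc_self hs)).sub_const (ψ 0)).hasDerivWithinAt)
    (by simp) (fun s => (hasDerivAt_id s).const_mul M |>.congr_deriv (mul_one M))
    (fun s hs hsM => hV _ ?_)
  rw [mem_closedBall, dist_eq_norm, show ‖ψ s - ψ 0‖ = M * s from hsM]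
  exact (mul_le_mul_of_nonneg_left hs.2.le hM).trans htr

theorem norm_sub_le_mul_abs_of_hasDerivAt (hM : 0 ≤ M)
    (hV : ∀ y ∈ closedBall (ψ 0) r, ‖V y‖ < M)
    (hψ : ∀ s ∈ uIcc 0 t, HasDerivAt ψ (V (ψ s)) s) (htr : M * |t| ≤ r) :
    ‖ψ t - ψ 0‖ ≤ M * |t| := by
  rcases le_total 0 t with ht | ht
  · rw [uIcc_of_le ht] at hψ
    rw [abs_of_nonneg ht] at htr ⊢
    exact norm_sub_le_mul_of_hasDerivAt hM hV hψ htr t ⟨ht, le_rfl⟩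
  · rw [uIcc_of_ge ht] at hψ
    rw [abs_of_nonpos ht] at htr ⊢
    have hψ' : ∀ s ∈ Icc 0 (-t), HasDerivAt (fun s => ψ (-s)) (-V (ψ (-s))) s :=
      fun s hs => by
        simpa [Function.comp_def] using
          (hψ (-s) ⟨by linarith [hs.2], by linarith [hs.1]⟩).scomp s (hasDerivAt_neg s)
    simpa using norm_sub_le_mul_of_hasDerivAt (V := fun y => -V y) hM (by simpa using hV)
      hψ' htr (-t) ⟨by linarith, le_rfl⟩

end Confinement

section LocalFlow

variable {E : Type*} [NormedAddCommGroup E] [NormedSpace ℝ E]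

/-- `φ` solves the flow equation of `V` for base points near `x₀` and times near `0`; nothing
is assumed about how `φ t x` depends on `x`. -/
structure IsLocalFlowAt (V : E → E) (φ : ℝ → E → E) (x₀ : E) : Prop where
  eventually_map_zero : ∀ᶠ x in 𝓝 x₀, φ 0 x = x
  eventually_hasDerivAt :
    ∀ᶠ p : E × ℝ in 𝓝 x₀ ×ˢ 𝓝 0, HasDerivAt (fun s => φ s p.1) (V (φ p.2 p.1)) p.2

namespace IsLocalFlowAt

variable {V : E → E} {φ : ℝ → E → E} {x₀ : E}

theorem of_forall_mem {U : Set E} {ε : ℝ} (hU : U ∈ 𝓝 x₀) (hε : 0 < ε)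
    (h0 : ∀ x ∈ U, φ 0 x = x)
    (h : ∀ x ∈ U, ∀ t ∈ Ioo (-ε) ε, HasDerivAt (fun s => φ s x) (V (φ t x)) t) :
    IsLocalFlowAt V φ x₀ where
  eventually_map_zero := eventually_of_mem hU h0
  eventually_hasDerivAt :=
    eventually_of_mem (prod_mem_prod hU (Ioo_mem_nhds (by linarith) hε))
      fun p hp => h p.1 hp.1 p.2 hp.2

theorem neg (hφ : IsLocalFlowAt V φ x₀) :
    IsLocalFlowAt (fun x => -V x) (fun t => φ (-t)) x₀ where
  eventually_map_zero := by simpa using hφ.eventually_map_zero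
  eventually_hasDerivAt := by
    have hneg : Tendsto (fun p : E × ℝ => (p.1, -p.2)) (𝓝 x₀ ×ˢ 𝓝 0) (𝓝 x₀ ×ˢ 𝓝 0) :=
      tendsto_fst.prodMk (by simpa using (tendsto_snd (f := 𝓝 x₀) (g := 𝓝 (0 : ℝ))).neg)
    filter_upwards [hneg.eventually hφ.eventually_hasDerivAt] with p hp
    simpa [Function.comp_def] using hp.scomp p.2 (hasDerivAt_neg p.2)

theorem tendsto (hφ : IsLocalFlowAt V φ x₀) (hV : ContinuousAt V x₀) :
    Tendsto (fun p : E × ℝ => φ p.2 p.1) (𝓝 x₀ ×ˢ 𝓝 0) (𝓝 x₀) := by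
  obtain ⟨r₀, hr₀, hVr₀⟩ := Metric.continuousAt_iff.1 hV 1 one_pos
  set M := ‖V x₀‖ + 1
  have hVM : ∀ y ∈ ball x₀ r₀, ‖V y‖ < M := fun y hy => by
    have hnorm := norm_le_norm_add_norm_sub' (V y) (V x₀)
    have hdist := hVr₀ hy
    rw [dist_eq_norm] at hdist
    linarith
  rw [Metric.tendsto_nhds]
  intro ρ hρ
  -- `r ≤ r₀ / 3` keeps `closedBall x r` inside `ball x₀ r₀` for `x ∈ ball x₀ r`, and `2 r ≤ ρ`.
  set r := min (r₀ / 3) (ρ / 2)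
  have hr : 0 < r := by positivity
  have hsmall : ∀ᶠ t in 𝓝 (0 : ℝ), M * |t| ≤ r := by
    have : Tendsto (fun t : ℝ => M * |t|) (𝓝 0) (𝓝 0) := by
      simpa using ((continuous_abs.tendsto (0 : ℝ)).const_mul M)
    exact this.eventually (eventually_le_nhds hr)
  filter_upwards [eventually_forall_uIcc_zero hφ.eventually_hasDerivAt,
    (hφ.eventually_map_zero.and (ball_mem_nhds x₀ hr)).prod_inl _, hsmall.prod_inr _]
    with ⟨x, t⟩ hderiv ⟨hx0, hx⟩ ht
  have hxr : dist x x₀ < r := hx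
  have hflow := norm_sub_le_mul_abs_of_hasDerivAt (ψ := fun s => φ s x) (by positivity)
    (fun y hy => hVM y ?_) hderiv ht
  · simp only [hx0] at hflow
    calc dist (φ t x) x₀ ≤ ‖φ t x - x‖ + dist x x₀ := by
          rw [← dist_eq_norm]; exact dist_triangle _ _ _
      _ < r + r := by linarith
      _ ≤ ρ := by linarith [min_le_right (r₀ / 3) (ρ / 2)]
  · simp only [hx0, mem_closedBall] at hy
    rw [mem_ball]
    linarith [dist_triangle y x x₀, min_le_left (r₀ / 3) (ρ / 2)]

theorem isBigO_sub (hφ : IsLocalFlowAt V φ x₀) (hV : ContinuousAt V x₀) :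
    (fun p : E × ℝ => φ p.2 p.1 - p.1) =O[𝓝 x₀ ×ˢ 𝓝 0] fun p => p.2 := by
  have hVφ : (fun p : E × ℝ => V (φ p.2 p.1)) =O[𝓝 x₀ ×ˢ 𝓝 0] fun p => p.2 ^ 0 := by
    simpa using (hV.tendsto.comp (hφ.tendsto hV)).isBigO_one ℝ
  simpa using isBigO_pow_succ_of_hasDerivAt
    (by simpa [sub_eq_zero] using hφ.eventually_map_zero)
    (hφ.eventually_hasDerivAt.mono fun p hp => hp.sub_const p.1) hVφ

theorem isBigO_field_sub (hφ : IsLocalFlowAt V φ x₀) (hV : ContDiffAt ℝ 2 V x₀) :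
    (fun p : E × ℝ => V (φ p.2 p.1) - V p.1 - p.2 • fderiv ℝ V p.1 (V p.1))
      =O[𝓝 x₀ ×ˢ 𝓝 0] fun p => p.2 ^ 2 := by
  have hφx := hφ.tendsto hV.continuousAt
  obtain ⟨K, s, hs, hK⟩ := hV.contDiffAt_fderiv_apply_self.exists_lipschitzOnWith
  have hdiff : ∀ᶠ y in 𝓝 x₀, DifferentiableAt ℝ V y :=
    (hV.eventually (by simp)).mono fun y hy => hy.differentiableAt (by norm_num)
  have haccel : (fun p : E × ℝ =>
      fderiv ℝ V (φ p.2 p.1) (V (φ p.2 p.1)) - fderiv ℝ V p.1 (V p.1))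
        =O[𝓝 x₀ ×ˢ 𝓝 0] fun p => p.2 ^ 1 := by
    simpa using (hK.isBigO_comp_sub (hφx.eventually hs) (tendsto_fst.eventually hs)).trans
      (hφ.isBigO_sub hV.continuousAt)
  refine isBigO_pow_succ_of_hasDerivAt
    (hφ.eventually_map_zero.mono fun x hx => by simp [hx]) ?_ haccel
  filter_upwards [hφ.eventually_hasDerivAt, hφx.eventually hdiff] with p hp hVp
  simpa using ((hVp.hasFDerivAt.comp_hasDerivAt p.2 hp).sub_const (V p.1)).fun_sub
    ((hasDerivAt_id' p.2).smul_const (fderiv ℝ V p.1 (V p.1)))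

theorem isBigO_sub_taylor (hφ : IsLocalFlowAt V φ x₀) (hV : ContDiffAt ℝ 2 V x₀) :
    (fun p : E × ℝ =>
      φ p.2 p.1 - p.1 - p.2 • V p.1 - (p.2 ^ 2 / 2) • fderiv ℝ V p.1 (V p.1))
        =O[𝓝 x₀ ×ˢ 𝓝 0] fun p => p.2 ^ 3 := by
  refine isBigO_pow_succ_of_hasDerivAt
    (hφ.eventually_map_zero.mono fun x hx => by simp [hx]) ?_ (hφ.isBigO_field_sub hV)
  filter_upwards [hφ.eventually_hasDerivAt] with p hp
  simpa using ((hp.sub_const p.1).fun_sub ((hasDerivAt_id' p.2).smul_const (V p.1))).fun_sub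
    (((hasDerivAt_pow 2 p.2).div_const 2).smul_const (fderiv ℝ V p.1 (V p.1)))

theorem isBigO_comp_taylor (hφ : IsLocalFlowAt V φ x₀) (hV : ContDiffAt ℝ 2 V x₀)
    {y : ℝ → E} {p q : E}
    (hy : (fun t => y t - x₀ - t • p - t ^ 2 • q) =O[𝓝 0] fun t => t ^ 3) :
    (fun t => φ t (y t) - x₀ - t • (p + V x₀)
        - t ^ 2 • (q + fderiv ℝ V x₀ p + (1 / 2 : ℝ) • fderiv ℝ V x₀ (V x₀)))
      =O[𝓝 0] fun t => t ^ 3 := by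
  have hy₂ : (fun t => y t - x₀ - t • p) =O[𝓝 0] fun t => t ^ 2 := by
    simpa using (hy.trans (isLittleO_pow_pow (by norm_num : 2 < 3)).isBigO).add
      (isBigO_pow_smul_const 2 q)
  have hy₁ : (fun t => y t - x₀) =O[𝓝 0] fun t => t ^ 1 := by
    simpa using (hy₂.trans (isLittleO_pow_pow (by norm_num : 1 < 2)).isBigO).add
      (isBigO_pow_smul_const 1 p)
  have hyt : Tendsto y (𝓝 0) (𝓝 x₀) :=
    tendsto_sub_nhds_zero_iff.1 <|
      hy₁.trans_tendsto ((continuous_pow 1).tendsto' _ _ (zero_pow one_ne_zero))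
  have hstep : (fun t =>
      φ t (y t) - y t - t • V (y t) - (t ^ 2 / 2) • fderiv ℝ V (y t) (V (y t)))
        =O[𝓝 0] fun t => t ^ 3 :=
    (hφ.isBigO_sub_taylor hV).comp_tendsto (hyt.prodMk tendsto_id)
  have hrem :
      (fun t => V (y t) - V x₀ - fderiv ℝ V x₀ (y t - x₀)) =O[𝓝 0] fun t => t ^ 2 := by
    simpa [Function.comp_def] using
      (hV.isBigO_sub_sub_fderiv.comp_tendsto hyt).trans (hy₁.norm_left.pow 2)
  have hfield : (fun t => V (y t) - V x₀ - t • fderiv ℝ V x₀ p) =O[𝓝 0] fun t => t ^ 2 :=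
    (hrem.add ((fderiv ℝ V x₀).isBigO_comp _ _ |>.trans hy₂)).congr_left fun t => by
      simp only [map_sub, map_smul]
      abel
  have haccel : (fun t => fderiv ℝ V (y t) (V (y t)) - fderiv ℝ V x₀ (V x₀)) =O[𝓝 0]
      fun t => t ^ 1 :=
    ((hV.contDiffAt_fderiv_apply_self.differentiableAt (by norm_num)).isBigO_sub.comp_tendsto
      hyt).trans hy₁
  have ht : (fun t : ℝ => t) =O[𝓝 0] fun t => t ^ 1 := by simpa using isBigO_refl _ _
  have ht2 : (fun t : ℝ => t ^ 2 / 2) =O[𝓝 0] fun t => t ^ 2 := by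
    simpa [div_eq_inv_mul] using (isBigO_refl (fun t : ℝ => t ^ 2) _).const_mul_left (1 / 2)
  -- The remainder is the flow-step error, plus the error of `y`, plus `t •` the linearisation
  -- error of `V` at `x₀`, plus `(t² / 2) •` the drift of `DV · V`.
  refine (((hstep.add hy).add (ht.smul_pow hfield)).add (ht2.smul_pow haccel)).congr_left
    fun t => ?_
  module

end IsLocalFlowAt

end LocalFlow

theorem flow_commutator_lieBracket_expansion_general
    {d : ℕ} (F G : EuclideanSpace ℝ (Fin d) → EuclideanSpace ℝ (Fin d))
    (hF : ContDiff ℝ 2 F) (hG : ContDiff ℝ 2 G)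
    (X₀ : EuclideanSpace ℝ (Fin d))
    (U : Set (EuclideanSpace ℝ (Fin d))) (hU : U ∈ nhds X₀)
    (ε : ℝ) (hε : 0 < ε)
    (φF φG : ℝ → EuclideanSpace ℝ (Fin d) → EuclideanSpace ℝ (Fin d))
    (hφF0 : ∀ x ∈ U, φF 0 x = x)
    (hφG0 : ∀ x ∈ U, φG 0 x = x)
    (hφF : ∀ x ∈ U, ∀ t ∈ Set.Ioo (-ε) ε,
      HasDerivAt (fun s => φF s x) (F (φF t x)) t)
    (hφG : ∀ x ∈ U, ∀ t ∈ Set.Ioo (-ε) ε,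
      HasDerivAt (fun s => φG s x) (G (φG t x)) t) :
    ∃ C > 0, ∃ ε' > 0, ∀ t : ℝ, |t| < ε' →
      ‖φG (-t) (φF (-t) (φG t (φF t X₀))) - X₀ -
          (t ^ 2) • (fderiv ℝ G X₀ (F X₀) - fderiv ℝ F X₀ (G X₀))‖
        ≤ C * |t| ^ 3 := by
  have flowF := IsLocalFlowAt.of_forall_mem hU hε hφF0 hφF
  have flowG := IsLocalFlowAt.of_forall_mem hU hε hφG0 hφG
  have hF₀ : ContDiffAt ℝ 2 F X₀ := hF.contDiffAt
  have hG₀ : ContDiffAt ℝ 2 G X₀ := hG.contDiffAt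
  have hX₀ : (fun t : ℝ => X₀ - X₀ - t • (0 : EuclideanSpace ℝ (Fin d)) - t ^ 2 • 0)
      =O[𝓝 0] fun t => t ^ 3 := by
    simpa using isBigO_zero _ _
  have hΘ := flowG.neg.isBigO_comp_taylor hG₀.neg <| flowF.neg.isBigO_comp_taylor hF₀.neg <|
    flowG.isBigO_comp_taylor hG₀ <| flowF.isBigO_comp_taylor hF₀ hX₀
  refine exists_pos_bound_of_isBigO_pow (hΘ.congr_left fun t => ?_)
  simp only [fderiv_fun_neg, neg_apply, map_add, map_neg, map_zero]
  module

/-- Second-order expansion of the commutator of two flows: for `C²` vector fields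
`F, G` on `ℝ^d` with flow maps `φ^F, φ^G`, the composition
`Θ(t) = φ^G_{−t} ∘ φ^F_{−t} ∘ φ^G_t ∘ φ^F_t (X₀)` satisfies
`Θ(t) = X₀ + t² [F, G](X₀) + O(|t|³)`, where
`[F, G](x) = DG(x)·F(x) − DF(x)·G(x)`. -/
theorem flow_commutator_lieBracket_expansion
    {d : ℕ} (F G : EuclideanSpace ℝ (Fin d) → EuclideanSpace ℝ (Fin d))
    (hF : ContDiff ℝ 2 F) (hG : ContDiff ℝ 2 G)
    (X₀ : EuclideanSpace ℝ (Fin d))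
    (U : Set (EuclideanSpace ℝ (Fin d))) (hU : U ∈ nhds X₀)
    (ε : ℝ) (hε : 0 < ε)
    (φF φG : ℝ → EuclideanSpace ℝ (Fin d) → EuclideanSpace ℝ (Fin d))
    (hφF0 : ∀ x ∈ U, φF 0 x = x)
    (hφG0 : ∀ x ∈ U, φG 0 x = x)
    (hφF : ∀ x ∈ U, ∀ t ∈ Set.Ioo (-ε) ε,
      HasDerivAt (fun s => φF s x) (F (φF t x)) t)
    (hφG : ∀ x ∈ U, ∀ t ∈ Set.Ioo (-ε) ε,
      HasDerivAt (fun s => φG s x) (G (φG t x)) t)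
    (δ : ℝ) (hδ : 0 < δ) (hδε : δ ≤ ε)
    (hmem : ∀ t : ℝ, |t| < δ → X₀ ∈ U ∧ φF t X₀ ∈ U ∧ φG t (φF t X₀) ∈ U ∧
      φF (-t) (φG t (φF t X₀)) ∈ U) :
    ∃ C > 0, ∃ ε' > 0, ∀ t : ℝ, |t| < ε' →
      ‖φG (-t) (φF (-t) (φG t (φF t X₀))) - X₀ -
          (t ^ 2) • (fderiv ℝ G X₀ (F X₀) - fderiv ℝ F X₀ (G X₀))‖
        ≤ C * |t| ^ 3 :=
  flow_commutator_lieBracket_expansion_general F G hF hG X₀ U hU ε hε φF φG hφF0 hφG0 hφF hφG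
end

section
/- Let t₁, t₂, t₃, t₄ ∈ ℝ³ be unit vectors with t_i · t_j = −1/3 for all i ≠ j (the directions from the center to the vertices of a regular tetrahedron). Then the six vectors v_{k,l} = (t_l − t_k, t_l × t_k) ∈ ℝ³ × ℝ³ ≅ ℝ⁶, taken over the six pairs (k, l) with 1 ≤ k < l ≤ 4, are linearly independent; equivalently, the 6×6 matrix whose columns are these six vectors has nonzero determinant. -/
open Matrix

/-!
The six vectors are Plücker coordinates of the edge lines of the tetrahedron. The polar form of
the Klein quadric pairs the lines `ab` and `cd` to `-det (b - a, c - a, d - a)`, a multiple of the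
volume of `abcd`: it vanishes when the lines share a point and not when they are opposite edges of
a nondegenerate tetrahedron. Pairing with the opposite edge therefore gives a family of linear
forms, each vanishing on all edges but one. The regular tetrahedron is nondegenerate: dotting
`∑ wᵢ tᵢ = 0` (with `∑ wᵢ = 0`) against `tⱼ` leaves `(4/3) wⱼ = 0`.
-/

section Plucker

variable {K : Type*} [Field K]

/-- Plücker coordinates of the line through `a` and `b`. -/
def plucker (a b : Fin 3 → K) : Fin 6 → K := Fin.append (b - a) (b ⨯₃ a)

/-- Pairing with `y` under the polar form of the Klein quadric. -/
def kleinDual (y : Fin 6 → K) : Module.Dual K (Fin 6 → K) :=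
  dotProductEquiv K (Fin 6) (Fin.append (fun i => y (Fin.natAdd 3 i)) (fun i => y (Fin.castAdd 3 i)))

theorem kleinDual_append_append (u v x w : Fin 3 → K) :
    kleinDual (Fin.append u v) (Fin.append x w) = v ⬝ᵥ x + u ⬝ᵥ w := by
  rw [kleinDual, dotProductEquiv_apply_apply, dotProduct, Fin.sum_univ_add (a := 3) (b := 3)]
  simp only [Fin.append_left, Fin.append_right]
  rfl

theorem kleinDual_plucker_plucker (a b c d : Fin 3 → K) :
    kleinDual (plucker c d) (plucker a b) = -(of ![b - a, c - a, d - a]).det := by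
  rw [plucker, plucker, kleinDual_append_append]
  simp only [dotProduct, Fin.sum_univ_three, cross_apply, det_fin_three, of_apply, Pi.sub_apply,
    cons_val_zero, cons_val_one, cons_val_two, head_cons, tail_cons]
  ring

theorem kleinDual_plucker_plucker_eq_zero {a b c d : Fin 3 → K}
    (h : a = c ∨ a = d ∨ b = c ∨ b = d) : kleinDual (plucker c d) (plucker a b) = 0 := by
  rw [kleinDual_plucker_plucker, neg_eq_zero]
  rcases h with rfl | rfl | rfl | rfl
  · exact det_eq_zero_of_row_eq_zero 1 fun j => by simp
  · exact det_eq_zero_of_row_eq_zero 2 fun j => by simp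
  · exact det_zero_of_row_eq (i := 0) (j := 1) (by decide) rfl
  · exact det_zero_of_row_eq (i := 0) (j := 2) (by decide) rfl

theorem AffineIndependent.det_sub_ne_zero {t : Fin 4 → Fin 3 → K} (ht : AffineIndependent K t)
    {k l m n : Fin 4} (hinj : Function.Injective ![k, l, m, n]) :
    (of ![t l - t k, t m - t k, t n - t k]).det ≠ 0 := by
  have hvsub := ht.comp_embedding ⟨_, hinj⟩
  rw [affineIndependent_iff_linearIndependent_vsub K _ 0] at hvsub
  have hrows : (of ![t l - t k, t m - t k, t n - t k]).row =
      fun i => t (![k, l, m, n] i.succ) - t k := by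
    ext i : 1
    fin_cases i <;> rfl
  rw [← isUnit_iff_ne_zero, ← isUnit_iff_isUnit_det, ← linearIndependent_rows_iff_isUnit, hrows]
  exact hvsub.comp (finSuccAboveEquiv 0) (Equiv.injective _)

theorem exists_opposite_edge (q : {q : Fin 4 × Fin 4 // q.1 < q.2}) :
    ∃ q' : {q : Fin 4 × Fin 4 // q.1 < q.2}, Function.Injective ![q.1.1, q.1.2, q'.1.1, q'.1.2] ∧
      ∀ p : {q : Fin 4 × Fin 4 // q.1 < q.2}, p ≠ q →
        p.1.1 = q'.1.1 ∨ p.1.1 = q'.1.2 ∨ p.1.2 = q'.1.1 ∨ p.1.2 = q'.1.2 := by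
  revert q
  decide

theorem AffineIndependent.linearIndependent_plucker {t : Fin 4 → Fin 3 → K}
    (ht : AffineIndependent K t) :
    LinearIndependent K fun q : {q : Fin 4 × Fin 4 // q.1 < q.2} => plucker (t q.1.1) (t q.1.2) := by
  choose opp hinj hmeet using exists_opposite_edge
  set φ := fun q => kleinDual (plucker (t (opp q).1.1) (t (opp q).1.2))
  have hφ : ∀ q, φ q (plucker (t q.1.1) (t q.1.2)) ≠ 0 := fun q => by
    rw [kleinDual_plucker_plucker, neg_ne_zero]
    exact ht.det_sub_ne_zero (hinj q)
  refine .of_pairwise_dual_eq_zero_one _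
    (fun q => (φ q (plucker (t q.1.1) (t q.1.2)))⁻¹ • φ q) ?_ fun q => inv_mul_cancel₀ (hφ q)
  intro q p hqp
  rw [LinearMap.smul_apply, smul_eq_mul]
  refine mul_eq_zero_of_right _ (kleinDual_plucker_plucker_eq_zero ?_)
  rcases hmeet q p hqp.symm with h | h | h | h <;> simp [h]

theorem affineIndependent_of_dotProduct_eq_ite {ι m : Type*} [Fintype m] [DecidableEq ι]
    {t : ι → m → K} {a b : K} (hab : a ≠ b) (h : ∀ i j, t i ⬝ᵥ t j = if i = j then a else b) :
    AffineIndependent K t := by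
  rw [affineIndependent_iff]
  intro s w hw hwt j hj
  have hsplit : ∀ e, w e * (if e = j then a else b) =
      (if e = j then (a - b) * w e else 0) + b * w e := by
    intro e
    split_ifs <;> ring
  have hj' := congrArg (· ⬝ᵥ t j) hwt
  simp only [sum_dotProduct, smul_dotProduct, h, zero_dotProduct, smul_eq_mul, hsplit,
    Finset.sum_add_distrib, Finset.sum_ite_eq', if_pos hj, ← Finset.mul_sum, hw, mul_zero,
    add_zero] at hj'
  exact (mul_eq_zero.1 hj').resolve_left (sub_ne_zero.2 hab)

end Plucker

/-- For unit vectors `t₁, t₂, t₃, t₄ ∈ ℝ³` with pairwise inner products `−1/3`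
(the directions to the vertices of a regular tetrahedron), the six vectors
`(t_l − t_k, t_l × t_k) ∈ ℝ⁶`, for the six pairs `k < l`, are linearly
independent. -/
theorem tetrahedron_bracket_linearIndependent
    (t : Fin 4 → (Fin 3 → ℝ))
    (hunit : ∀ i, ∑ k, t i k * t i k = 1)
    (hdot : ∀ i j, i ≠ j → ∑ k, t i k * t j k = -(1 / 3)) :
    LinearIndependent ℝ
      (fun q : {q : Fin 4 × Fin 4 // q.1 < q.2} =>
        (Fin.append (t q.1.2 - t q.1.1)
          (crossProduct (t q.1.2) (t q.1.1)) : Fin 6 → ℝ)) := by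
  have hgram : ∀ i j, t i ⬝ᵥ t j = if i = j then 1 else -(1 / 3) := by
    intro i j
    split_ifs with h
    · exact h ▸ hunit i
    · exact hdot i j h
  exact (affineIndependent_of_dotProduct_eq_ite (by norm_num) hgram).linearIndependent_plucker
end
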